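/- arXiv:2103.01102 — 5 statements merged into one kernel-verified Lean document; each statement's English description precedes it below -/
import Mathlib

section
/- If a + |b| < 0, then every complex root λ of the characteristic equation λ = a + b·e^{-λ} satisfies Re(λ) < 0. -/
open Complex

lemma Complex.norm_exp_neg_le_one {z : ℂ} (hz : 0 ≤ z.re) : ‖exp (-z)‖ ≤ 1 := by
  rw [norm_exp, neg_re, Real.exp_le_one_iff]
  linarith

lemma Complex.re_ofReal_add_ofReal_mul_le (a b : ℝ) {w : ℂ} (hw : ‖w‖ ≤ 1) :
    ((a : ℂ) + b * w).re ≤ a + |b| := by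
  have hbw : b * w.re ≤ |b| :=
    calc b * w.re ≤ |b| * |w.re| := by rw [← abs_mul]; exact le_abs_self _
      _ ≤ |b| * 1 := by gcongr; exact (abs_re_le_norm w).trans hw
      _ = |b| := mul_one _
  simpa using hbw

theorem root_re_neg_of_a_add_abs_b_neg (a b : ℝ) (h : a + |b| < 0) :
    ∀ lam : ℂ, lam = (a : ℂ) + (b : ℂ) * Complex.exp (-lam) → lam.re < 0 := by
  intro lam hlam
  by_contra! hre
  have hle : lam.re ≤ a + |b| := by
    rw [hlam]
    exact re_ofReal_add_ofReal_mul_le a b (norm_exp_neg_le_one hre)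
  linarith
end

section
/- If -π/2 < b < 0, then every complex root λ of λ = b·e^{-λ} satisfies Re(λ) < 0. -/
/-!
If `Re λ ≥ 0`, then `|Im λ| ≤ |λ| = |b| e^{-Re λ} ≤ |b| < π/2`, so `cos (Im λ) > 0`; but the real
part of the equation reads `Re λ = b e^{-Re λ} cos (Im λ)`, which is then negative.
-/

open Complex

section

variable {b : ℝ} {z : ℂ}

theorem norm_eq_of_eq_mul_exp_neg (hz : z = b * exp (-z)) : ‖z‖ = |b| * Real.exp (-z.re) := by
  conv_lhs => rw [hz]
  rw [norm_mul, norm_exp, norm_real, Real.norm_eq_abs, neg_re]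

theorem re_eq_of_eq_mul_exp_neg (hz : z = b * exp (-z)) :
    z.re = b * (Real.exp (-z.re) * Real.cos z.im) := by
  conv_lhs => rw [hz]
  simp only [re_ofReal_mul, exp_re, neg_re, neg_im, Real.cos_neg]

theorem abs_im_le_of_eq_mul_exp_neg (hz : z = b * exp (-z)) (hre : 0 ≤ z.re) :
    |z.im| ≤ |b| :=
  calc |z.im| ≤ ‖z‖ := abs_im_le_norm z
    _ = |b| * Real.exp (-z.re) := norm_eq_of_eq_mul_exp_neg hz
    _ ≤ |b| :=
      mul_le_of_le_one_right (abs_nonneg b) (Real.exp_le_one_iff.mpr (neg_nonpos.mpr hre))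

end

theorem root_re_neg_of_b_in_stability_interval (b : ℝ)
    (h1 : -(Real.pi / 2) < b) (h2 : b < 0) :
    ∀ lam : ℂ, lam = (b : ℂ) * Complex.exp (-lam) → lam.re < 0 := by
  intro lam hlam
  by_contra! hre
  have him : |lam.im| < Real.pi / 2 := by
    calc |lam.im| ≤ |b| := abs_im_le_of_eq_mul_exp_neg hlam hre
      _ < Real.pi / 2 := by rw [abs_of_neg h2]; linarith
  have hcos : 0 < Real.cos lam.im :=
    Real.cos_pos_of_mem_Ioo (abs_lt.mp him)
  have hneg : lam.re < 0 := by
    rw [re_eq_of_eq_mul_exp_neg hlam]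
    exact mul_neg_of_neg_of_pos h2 (mul_pos (Real.exp_pos _) hcos)
  linarith
end

section
/- If b ≤ -π/2, then the characteristic equation λ = b·e^{-λ} has a complex root λ with Re(λ) ≥ 0. -/
/-!
If `sin y ≠ 0` and `x = -y cot y`, then `λ = x + iy = -(y / sin y) e^{-iy}`, so `λ e^λ` is the
real number `-(y / sin y) e^x`. The gain `y ↦ (y / sin y) e^{-y cot y}` equals `π/2` at `y = π/2`
and tends to `∞` as `y → π⁻`, so by the intermediate value theorem it attains every value
`-b ≥ π/2`; since `cos y ≤ 0` on this range, the root found has `x ≥ 0`.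
-/

open Real Filter Topology Set
open Complex (I)

namespace DelayCharacteristic

noncomputable def rootRe (y : ℝ) : ℝ := -y * Real.cos y / Real.sin y

noncomputable def rootGain (y : ℝ) : ℝ := y / Real.sin y * Real.exp (rootRe y)

lemma root_eq_mul_exp_neg {y b : ℝ} (hy : Real.sin y ≠ 0) (hb : rootGain y = -b) :
    (rootRe y + y * I : ℂ) = b * Complex.exp (-(rootRe y + y * I)) := by
  have hexp : Complex.exp (-(rootRe y + y * I)) =
      (Real.exp (rootRe y) : ℂ)⁻¹ * (Real.cos y - Real.sin y * I) := by
    rw [neg_add, Complex.exp_add, Complex.exp_neg, ← Complex.ofReal_exp, ← neg_mul,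
      ← Complex.ofReal_neg, Complex.exp_mul_I, ← Complex.ofReal_cos, ← Complex.ofReal_sin,
      Real.cos_neg, Real.sin_neg]
    push_cast
    ring
  have hs : (Real.sin y : ℂ) ≠ 0 := by exact_mod_cast hy
  have he : (Real.exp (rootRe y) : ℂ) ≠ 0 := by exact_mod_cast (Real.exp_pos _).ne'
  rw [hexp, show b = -rootGain y by linarith, rootGain]
  simp only [Complex.ofReal_neg, Complex.ofReal_mul, Complex.ofReal_div]
  nth_rw 1 [rootRe]
  simp only [Complex.ofReal_neg, Complex.ofReal_mul, Complex.ofReal_div]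
  field_simp
  ring

lemma rootRe_nonneg {y : ℝ} (hy : y ∈ Ico (π / 2) π) : 0 ≤ rootRe y := by
  have hs : 0 < Real.sin y := Real.sin_pos_of_pos_of_lt_pi (by linarith [hy.1, pi_pos]) hy.2
  have hc : Real.cos y ≤ 0 :=
    Real.cos_nonpos_of_pi_div_two_le_of_le hy.1 (by linarith [hy.2, pi_pos])
  exact div_nonneg (by nlinarith [hy.1, pi_pos]) hs.le

lemma continuousOn_rootGain : ContinuousOn rootGain (Ioo 0 π) := by
  have hs : ∀ y ∈ Ioo 0 π, Real.sin y ≠ 0 := fun y hy => (Real.sin_pos_of_mem_Ioo hy).ne'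
  unfold rootGain rootRe
  fun_prop (disch := assumption)

lemma rootGain_pi_div_two : rootGain (π / 2) = π / 2 := by
  simp [rootGain, rootRe]

lemma tendsto_sin_nhdsLT_pi : Tendsto Real.sin (𝓝[<] π) (𝓝[>] 0) := by
  apply tendsto_nhdsWithin_of_tendsto_nhds_of_eventually_within
  · simpa using Real.continuous_sin.continuousWithinAt.tendsto (x := π) (s := Iio π)
  · filter_upwards [Ioo_mem_nhdsLT pi_pos] with y hy
    exact Real.sin_pos_of_mem_Ioo hy

lemma tendsto_rootGain_nhdsLT_pi : Tendsto rootGain (𝓝[<] π) atTop := by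
  have hdiv : Tendsto (fun y => y / Real.sin y) (𝓝[<] π) atTop := by
    simp only [div_eq_mul_inv]
    exact (tendsto_nhdsWithin_of_tendsto_nhds tendsto_id).pos_mul_atTop pi_pos
      tendsto_sin_nhdsLT_pi.inv_tendsto_nhdsGT_zero
  refine tendsto_atTop_mono' _ ?_ hdiv
  filter_upwards [Ico_mem_nhdsLT (half_lt_self pi_pos)] with y hy
  have hs : 0 < y / Real.sin y := div_pos (by linarith [hy.1, pi_pos])
    (Real.sin_pos_of_pos_of_lt_pi (by linarith [hy.1, pi_pos]) hy.2)
  exact le_mul_of_one_le_right hs.le (Real.one_le_exp (rootRe_nonneg hy))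

lemma Ici_subset_rootGain_image : Ici (π / 2) ⊆ rootGain '' Ico (π / 2) π := by
  simpa only [rootGain_pi_div_two] using isPreconnected_Ico.intermediate_value_Ici
    (left_mem_Ico.2 (half_lt_self pi_pos))
    (le_principal_iff.2 (Ico_mem_nhdsLT (half_lt_self pi_pos)))
    (continuousOn_rootGain.mono (Ico_subset_Ioo_left pi_div_two_pos)) tendsto_rootGain_nhdsLT_pi

end DelayCharacteristic

open DelayCharacteristic

theorem exists_unstable_root_of_b_le_neg_pi_div_two (b : ℝ)
    (hb : b ≤ -(Real.pi / 2)) :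
    ∃ lam : ℂ, lam = (b : ℂ) * Complex.exp (-lam) ∧ 0 ≤ lam.re := by
  obtain ⟨y, hy, hgain⟩ := Ici_subset_rootGain_image (show π / 2 ≤ -b by linarith)
  have hsin : Real.sin y ≠ 0 :=
    (Real.sin_pos_of_pos_of_lt_pi (by linarith [hy.1, pi_pos]) hy.2).ne'
  exact ⟨rootRe y + y * I, root_eq_mul_exp_neg hsin hgain, by simpa using rootRe_nonneg hy⟩
end

section
/- The function φ ↦ -φ/sin(φ) is strictly decreasing on (0, π). -/
open Real Set

/-- `sin x / x` is the slope of the chord of `sin` from the origin, which decreases since `sin` is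
strictly concave on `[0, π]`. -/
theorem strictAntiOn_sin_div_self : StrictAntiOn (fun x : ℝ => sin x / x) (Ioc 0 π) := by
  intro x hx y hy hxy
  have hslope := strictConcaveOn_sin_Icc.secant_strict_mono (a := 0) ⟨le_rfl, pi_pos.le⟩
    (Ioc_subset_Icc_self hx) (Ioc_subset_Icc_self hy) hx.1.ne' hy.1.ne' hxy
  simpa only [sin_zero, sub_zero] using hslope

theorem b_param_strictAntiOn :
    StrictAntiOn (fun φ : ℝ => -(φ / Real.sin φ)) (Set.Ioo 0 Real.pi) := by
  intro x hx y hy hxy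
  have hsin_x : 0 < sin x := sin_pos_of_pos_of_lt_pi hx.1 hx.2
  have hsin_y : 0 < sin y := sin_pos_of_pos_of_lt_pi hy.1 hy.2
  have hchord : sin y / y < sin x / x :=
    strictAntiOn_sin_div_self (Ioo_subset_Ioc_self hx) (Ioo_subset_Ioc_self hy) hxy
  rw [div_lt_div_iff₀ hy.1 hx.1] at hchord
  simp only [neg_lt_neg_iff]
  rw [div_lt_div_iff₀ hsin_x hsin_y]
  linarith
end

section
/- Suppose μ ≥ 0, φ_d ≥ 0, φ_r ≥ 0, σ > 0 and (φ_d + φ_r)·σ < π/2. Then every complex root λ of the characteristic equation λ = -μ - (φ_d + φ_r)·e^{-σλ} satisfies Re(λ) < 0. -/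
/-!
Suppose `λ = -μ - a e^{-σλ}` with `a = φ_d + φ_r` and `Re λ ≥ 0`. Then `|e^{-σλ}| ≤ 1`, so the
imaginary part gives `|Im λ| ≤ a`, hence `|σ Im λ| ≤ aσ < π/2` and `cos (σ Im λ) > 0`. The real
part `Re λ = -μ - a e^{-σ Re λ} cos (σ Im λ)` is then negative unless `μ = a = 0`.
-/

open Complex

section DelayCharacteristicEquation

variable {μ a σ : ℝ} {lam : ℂ}

lemma norm_exp_neg_ofReal_mul_le_one (hσ : 0 ≤ σ) (hre : 0 ≤ lam.re) :
    ‖exp (-(σ : ℂ) * lam)‖ ≤ 1 := by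
  rw [norm_exp, Real.exp_le_one_iff]
  simpa using mul_nonneg hσ hre

lemma re_neg_ofReal_sub_mul_exp (μ a σ : ℝ) (lam : ℂ) :
    (-(μ : ℂ) - (a : ℂ) * exp (-(σ : ℂ) * lam)).re
      = -μ - a * (Real.exp (-(σ * lam.re)) * Real.cos (σ * lam.im)) := by
  simp [exp_re]

lemma abs_im_le_of_eq_neg_sub_mul_exp (ha : 0 ≤ a) (hσ : 0 ≤ σ) (hre : 0 ≤ lam.re)
    (h : lam = -(μ : ℂ) - (a : ℂ) * exp (-(σ : ℂ) * lam)) : |lam.im| ≤ a :=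
  calc |lam.im| = |((a : ℂ) * exp (-(σ : ℂ) * lam)).im| := by
        conv_lhs => rw [h]
        simp
    _ ≤ ‖(a : ℂ) * exp (-(σ : ℂ) * lam)‖ := abs_im_le_norm _
    _ = a * ‖exp (-(σ : ℂ) * lam)‖ := by rw [norm_mul, norm_real, Real.norm_of_nonneg ha]
    _ ≤ a * 1 := mul_le_mul_of_nonneg_left (norm_exp_neg_ofReal_mul_le_one hσ hre) ha
    _ = a := mul_one a

lemma cos_mul_pos_of_abs_le (y : ℝ) (hσ : 0 ≤ σ) (hy : |y| ≤ a) (hbound : a * σ < Real.pi / 2) :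
    0 < Real.cos (σ * y) := by
  have habs : |σ * y| < Real.pi / 2 := by
    rw [abs_mul, abs_of_nonneg hσ]
    nlinarith
  exact Real.cos_pos_of_mem_Ioo (abs_lt.mp habs)

end DelayCharacteristicEquation

theorem infected_linearization_stable (μ φd φr σ : ℝ)
    (hμ : 0 ≤ μ) (hφd : 0 ≤ φd) (hφr : 0 ≤ φr) (hσ : 0 < σ)
    (hpos : 0 < μ ∨ 0 < φd + φr)
    (hbound : (φd + φr) * σ < Real.pi / 2) :
    ∀ lam : ℂ, lam = -(μ : ℂ) - ((φd + φr : ℝ) : ℂ) * Complex.exp (-(σ : ℂ) * lam) →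
      lam.re < 0 := by
  intro lam hlam
  by_contra! hre
  have ha : 0 ≤ φd + φr := add_nonneg hφd hφr
  have hcos : 0 < Real.cos (σ * lam.im) :=
    cos_mul_pos_of_abs_le _ hσ.le (abs_im_le_of_eq_neg_sub_mul_exp ha hσ.le hre hlam) hbound
  have hre_eq : lam.re = -μ - (φd + φr) * (Real.exp (-(σ * lam.re)) * Real.cos (σ * lam.im)) := by
    conv_lhs => rw [hlam]
    exact re_neg_ofReal_sub_mul_exp μ (φd + φr) σ lam
  have hdamping : 0 < μ + (φd + φr) * (Real.exp (-(σ * lam.re)) * Real.cos (σ * lam.im)) := by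
    rcases hpos with h | h <;> positivity
  linarith
end
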